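/- arXiv:1501.06120 — 8 statements merged into one kernel-verified Lean document; each statement's English description precedes it below -/
import Mathlib

section
/- Let F : 𝒳 × 𝒴 → 𝒵 be a bilinear map, Ω_X ⊆ 𝒳, Ω_Y ⊆ 𝒴, and let 𝒯 be a transformation group associated with F on Ω_X × Ω_Y. Then a pair (x0, y0) ∈ Ω_X × Ω_Y with x0 ≠ 0 and y0 ≠ 0 is identifiable up to 𝒯 if and only if the following two conditions hold: (1) for every (x, y) ∈ Ω_X × Ω_Y with F(x, y) = F(x0, y0), one has x ∈ [x0]^L; and (2) for every y ∈ Ω_Y with F(x0, y) = F(x0, y0), the pair (x0, y) lies in the orbit of (x0, y0) under 𝒯. -/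
/-! If `x = T x0` and `f x y = f x0 y0`, pull `y` back along the surjective `T.2` to some `y'`;
invariance gives `f x0 y' = f x0 y0`, so condition (2) yields `S` fixing `x0` with `S y0 = y'`,
and `T ∘ S` carries `(x0, y0)` to `(x, y)`. -/

section Orbit

variable {α β γ : Type*} {f : α → β → γ} {𝒯 : Set ((α → α) × (β → β))}

theorem exists_mem_orbit_of_left_mem_orbit
    (hcomp : ∀ T₁ ∈ 𝒯, ∀ T₂ ∈ 𝒯, ((T₂.1 ∘ T₁.1, T₂.2 ∘ T₁.2) : (α → α) × (β → β)) ∈ 𝒯)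
    (hsurj : ∀ T ∈ 𝒯, Function.Surjective T.2)
    (hf : ∀ T ∈ 𝒯, ∀ x y, f (T.1 x) (T.2 y) = f x y) {x₀ : α} {y₀ : β}
    (hleft : ∀ x y, f x y = f x₀ y₀ → ∃ T ∈ 𝒯, T.1 x₀ = x)
    (hfiber : ∀ y, f x₀ y = f x₀ y₀ → ∃ T ∈ 𝒯, T.1 x₀ = x₀ ∧ T.2 y₀ = y)
    {x : α} {y : β} (hxy : f x y = f x₀ y₀) :
    ∃ T ∈ 𝒯, T.1 x₀ = x ∧ T.2 y₀ = y := by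
  obtain ⟨T, hT, rfl⟩ := hleft x y hxy
  obtain ⟨y', rfl⟩ := hsurj T hT y
  obtain ⟨S, hS, hSx, hSy⟩ := hfiber y' ((hf T hT x₀ y').symm.trans hxy)
  exact ⟨_, hcomp S hS T hT, by simp [hSx], by simp [hSy]⟩

end Orbit

theorem stmt_1_general
    {X Y Z : Type*} [AddCommGroup X] [Module ℂ X] [AddCommGroup Y] [Module ℂ Y]
    [AddCommGroup Z] [Module ℂ Z]
    (F : X →ₗ[ℂ] Y →ₗ[ℂ] Z) (ΩX : Set X) (ΩY : Set Y)
    (𝒯 : Set ((ΩX → ΩX) × (ΩY → ΩY)))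
    -- 𝒯 is closed under componentwise composition
    (hcomp : ∀ T1 ∈ 𝒯, ∀ T2 ∈ 𝒯, ((T2.1 ∘ T1.1, T2.2 ∘ T1.2) : (ΩX → ΩX) × (ΩY → ΩY)) ∈ 𝒯)
    -- every element of 𝒯 has a componentwise inverse in 𝒯
    (hinv : ∀ T ∈ 𝒯, ∃ T' ∈ 𝒯, T'.1 ∘ T.1 = id ∧ T.1 ∘ T'.1 = id ∧
      T'.2 ∘ T.2 = id ∧ T.2 ∘ T'.2 = id)
    -- F is invariant under every transformation in 𝒯
    (hF : ∀ T ∈ 𝒯, ∀ (x : ΩX) (y : ΩY), F ↑(T.1 x) ↑(T.2 y) = F ↑x ↑y)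
    (x0 : ΩX) (y0 : ΩY) :
    -- (x0, y0) is identifiable up to 𝒯
    (∀ (x : ΩX) (y : ΩY), F ↑x ↑y = F ↑x0 ↑y0 →
        ∃ T ∈ 𝒯, T.1 x0 = x ∧ T.2 y0 = y)
    ↔
    -- Condition (1): any solution x lies in the left equivalence class of x0
    ((∀ (x : ΩX) (y : ΩY), F ↑x ↑y = F ↑x0 ↑y0 → ∃ T ∈ 𝒯, T.1 x0 = x) ∧
    -- Condition (2): (x0, y) lies in the orbit of (x0, y0)
     (∀ y : ΩY, F ↑x0 ↑y = F ↑x0 ↑y0 → ∃ T ∈ 𝒯, T.1 x0 = x0 ∧ T.2 y0 = y)) := by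
  have hsurj : ∀ T ∈ 𝒯, Function.Surjective T.2 := fun T hT ↦ by
    obtain ⟨T', -, -, -, -, hright⟩ := hinv T hT
    exact Function.RightInverse.surjective (congrFun hright)
  refine ⟨fun h ↦ ⟨fun x y hxy ↦ ?_, fun y ↦ h x0 y⟩, fun ⟨hleft, hfiber⟩ x y ↦
    exists_mem_orbit_of_left_mem_orbit (f := fun (x : ΩX) (y : ΩY) ↦ F x y)
      hcomp hsurj hF hleft hfiber⟩
  obtain ⟨T, hT, hTx, -⟩ := h x y hxy
  exact ⟨T, hT, hTx⟩

/-- A pair (x0,y0) is identifiable up to a transformation group 𝒯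
associated with a bilinear map F if and only if conditions (1) and (2) hold. -/
theorem stmt_1
    {X Y Z : Type*} [AddCommGroup X] [Module ℂ X] [AddCommGroup Y] [Module ℂ Y]
    [AddCommGroup Z] [Module ℂ Z]
    (F : X →ₗ[ℂ] Y →ₗ[ℂ] Z) (ΩX : Set X) (ΩY : Set Y)
    (𝒯 : Set ((ΩX → ΩX) × (ΩY → ΩY)))
    -- 𝒯 is closed under componentwise composition
    (hcomp : ∀ T1 ∈ 𝒯, ∀ T2 ∈ 𝒯, ((T2.1 ∘ T1.1, T2.2 ∘ T1.2) : (ΩX → ΩX) × (ΩY → ΩY)) ∈ 𝒯)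
    -- 𝒯 contains the identity pair
    (hid : ((id : ΩX → ΩX), (id : ΩY → ΩY)) ∈ 𝒯)
    -- every element of 𝒯 has a componentwise inverse in 𝒯
    (hinv : ∀ T ∈ 𝒯, ∃ T' ∈ 𝒯, T'.1 ∘ T.1 = id ∧ T.1 ∘ T'.1 = id ∧
      T'.2 ∘ T.2 = id ∧ T.2 ∘ T'.2 = id)
    -- F is invariant under every transformation in 𝒯
    (hF : ∀ T ∈ 𝒯, ∀ (x : ΩX) (y : ΩY), F ↑(T.1 x) ↑(T.2 y) = F ↑x ↑y)
    (x0 : ΩX) (y0 : ΩY) (hx0 : (x0 : X) ≠ 0) (hy0 : (y0 : Y) ≠ 0) :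
    -- (x0, y0) is identifiable up to 𝒯
    (∀ (x : ΩX) (y : ΩY), F ↑x ↑y = F ↑x0 ↑y0 →
        ∃ T ∈ 𝒯, T.1 x0 = x ∧ T.2 y0 = y)
    ↔
    -- Condition (1): any solution x lies in the left equivalence class of x0
    ((∀ (x : ΩX) (y : ΩY), F ↑x ↑y = F ↑x0 ↑y0 → ∃ T ∈ 𝒯, T.1 x0 = x) ∧
    -- Condition (2): (x0, y) lies in the orbit of (x0, y0)
     (∀ y : ΩY, F ↑x0 ↑y = F ↑x0 ↑y0 → ∃ T ∈ 𝒯, T.1 x0 = x0 ∧ T.2 y0 = y)) :=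
  stmt_1_general F ΩX ΩY 𝒯 hcomp hinv hF x0 y0
end

section
/- Let F : 𝒳 × 𝒴 → 𝒵 be a bilinear map, Ω_X ⊆ 𝒳, Ω_Y ⊆ 𝒴, and let 𝒯 be a transformation group associated with F on Ω_X × Ω_Y. A pair (x0, y0) ∈ Ω_X × Ω_Y with x0 ≠ 0 and y0 ≠ 0 is identifiable up to 𝒯 if the following two conditions hold: (1) for every (x, y) ∈ Ω_X × Ω_Y with F(x, y) = F(x0, y0), one has x ∈ [x0]^L; and (2) for every y ∈ Ω_Y with F(x0, y) = F(x0, y0), one has y = y0. Furthermore, if F has no non-trivial right annihilator of Ω_X (i.e., F(x, y') = 0 for all x ∈ Ω_X implies y' = 0), and for every (T_X, T_Y) ∈ 𝒯 the equality T_X(x0) = x0 implies that T_X is the identity map on Ω_X, then conditions (1) and (2) are also necessary for identifiability up to 𝒯. -/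
/-! If `T` moves `x0` to `x`, pulling `y` back along `T⁻¹` gives `y'` with
`F(x0, y') = F(x0, y0)`, so `y' = y0` by (2) and `T` carries `(x0, y0)` to `(x, y)`.
Conversely, a `T` with `T_X(x0) = x0` is the identity on `Ω_X`, so invariance gives
`F(x, T_Y y0) = F(x, y0)` on `Ω_X`, and the absence of a right annihilator forces
`T_Y y0 = y0`. -/

theorem map_right_eq_of_invariant {α β γ : Type*} (f : α → β → γ) {Tx : α → α}
    {Ty Ty' : β → β} (hf : ∀ a b, f (Tx a) (Ty b) = f a b)
    (hTy : Function.LeftInverse Ty Ty') {a0 a : α} {b0 b : β} (hTx : Tx a0 = a)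
    (hab : f a b = f a0 b0) (hright : ∀ b', f a0 b' = f a0 b0 → b' = b0) :
    Ty b0 = b := by
  have hpull : Ty' b = b0 := hright _ (by rw [← hf, hTx, hTy, hab])
  rw [← hpull, hTy]

theorem LinearMap.eq_of_forall_apply_eq_of_separating {R X Y Z : Type*} [CommSemiring R]
    [AddCommMonoid X] [Module R X] [AddCommGroup Y] [Module R Y] [AddCommGroup Z]
    [Module R Z] (F : X →ₗ[R] Y →ₗ[R] Z) {Ω : Set X}
    (hsep : ∀ y : Y, (∀ x ∈ Ω, F x y = 0) → y = 0) {y y' : Y}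
    (h : ∀ x ∈ Ω, F x y = F x y') : y = y' :=
  sub_eq_zero.mp <| hsep _ fun x hx => by rw [map_sub, h x hx, sub_self]

theorem stmt_2_general
    {X Y Z : Type*} [AddCommGroup X] [Module ℂ X] [AddCommGroup Y] [Module ℂ Y]
    [AddCommGroup Z] [Module ℂ Z]
    (F : X →ₗ[ℂ] Y →ₗ[ℂ] Z) (ΩX : Set X) (ΩY : Set Y)
    (𝒯 : Set ((ΩX → ΩX) × (ΩY → ΩY)))
    -- every element of 𝒯 has a componentwise inverse in 𝒯
    (hinv : ∀ T ∈ 𝒯, ∃ T' ∈ 𝒯, T'.1 ∘ T.1 = id ∧ T.1 ∘ T'.1 = id ∧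
      T'.2 ∘ T.2 = id ∧ T.2 ∘ T'.2 = id)
    -- F is invariant under every transformation in 𝒯
    (hF : ∀ T ∈ 𝒯, ∀ (x : ΩX) (y : ΩY), F ↑(T.1 x) ↑(T.2 y) = F ↑x ↑y)
    (x0 : ΩX) (y0 : ΩY) :
    -- Sufficiency: conditions (1) and (2) imply identifiability up to 𝒯
    (((∀ (x : ΩX) (y : ΩY), F ↑x ↑y = F ↑x0 ↑y0 → ∃ T ∈ 𝒯, T.1 x0 = x) ∧
      (∀ y : ΩY, F ↑x0 ↑y = F ↑x0 ↑y0 → y = y0)) →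
      (∀ (x : ΩX) (y : ΩY), F ↑x ↑y = F ↑x0 ↑y0 →
        ∃ T ∈ 𝒯, T.1 x0 = x ∧ T.2 y0 = y)) ∧
    -- Necessity under the extra assumptions
    ((∀ y' : Y, (∀ x ∈ ΩX, F x y' = 0) → y' = 0) →
     (∀ T ∈ 𝒯, T.1 x0 = x0 → T.1 = (id : ΩX → ΩX)) →
     (∀ (x : ΩX) (y : ΩY), F ↑x ↑y = F ↑x0 ↑y0 →
        ∃ T ∈ 𝒯, T.1 x0 = x ∧ T.2 y0 = y) →
     ((∀ (x : ΩX) (y : ΩY), F ↑x ↑y = F ↑x0 ↑y0 → ∃ T ∈ 𝒯, T.1 x0 = x) ∧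
      (∀ y : ΩY, F ↑x0 ↑y = F ↑x0 ↑y0 → y = y0))) := by
  refine ⟨fun ⟨hleft, hright⟩ x y hxy => ?_, fun hsep hfix hident => ⟨?_, ?_⟩⟩
  · obtain ⟨T, hT, hTx⟩ := hleft x y hxy
    obtain ⟨T', -, -, -, -, hTT'⟩ := hinv T hT
    exact ⟨T, hT, hTx, map_right_eq_of_invariant (fun (x : ΩX) (y : ΩY) => F x y) (hF T hT)
      (congrFun hTT') hTx hxy hright⟩
  · intro x y hxy
    obtain ⟨T, hT, hTx, -⟩ := hident x y hxy
    exact ⟨T, hT, hTx⟩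
  · intro y hy
    obtain ⟨T, hT, hTx, hTy⟩ := hident x0 y hy
    have hTid := hfix T hT hTx
    refine Subtype.ext (F.eq_of_forall_apply_eq_of_separating hsep fun x hx => ?_)
    simpa only [hTid, hTy, id_eq] using hF T hT ⟨x, hx⟩ y0

/-- Sufficient condition for identifiability up to a transformation
group 𝒯 associated with a bilinear map F, and its necessity under extra
assumptions (no non-trivial right annihilator of ΩX, and T_X(x0) = x0 only for
the identity component). -/
theorem stmt_2
    {X Y Z : Type*} [AddCommGroup X] [Module ℂ X] [AddCommGroup Y] [Module ℂ Y]
    [AddCommGroup Z] [Module ℂ Z]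
    (F : X →ₗ[ℂ] Y →ₗ[ℂ] Z) (ΩX : Set X) (ΩY : Set Y)
    (𝒯 : Set ((ΩX → ΩX) × (ΩY → ΩY)))
    -- 𝒯 is closed under componentwise composition
    (hcomp : ∀ T1 ∈ 𝒯, ∀ T2 ∈ 𝒯, ((T2.1 ∘ T1.1, T2.2 ∘ T1.2) : (ΩX → ΩX) × (ΩY → ΩY)) ∈ 𝒯)
    -- 𝒯 contains the identity pair
    (hid : ((id : ΩX → ΩX), (id : ΩY → ΩY)) ∈ 𝒯)
    -- every element of 𝒯 has a componentwise inverse in 𝒯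
    (hinv : ∀ T ∈ 𝒯, ∃ T' ∈ 𝒯, T'.1 ∘ T.1 = id ∧ T.1 ∘ T'.1 = id ∧
      T'.2 ∘ T.2 = id ∧ T.2 ∘ T'.2 = id)
    -- F is invariant under every transformation in 𝒯
    (hF : ∀ T ∈ 𝒯, ∀ (x : ΩX) (y : ΩY), F ↑(T.1 x) ↑(T.2 y) = F ↑x ↑y)
    (x0 : ΩX) (y0 : ΩY) (hx0 : (x0 : X) ≠ 0) (hy0 : (y0 : Y) ≠ 0) :
    -- Sufficiency: conditions (1) and (2) imply identifiability up to 𝒯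
    (((∀ (x : ΩX) (y : ΩY), F ↑x ↑y = F ↑x0 ↑y0 → ∃ T ∈ 𝒯, T.1 x0 = x) ∧
      (∀ y : ΩY, F ↑x0 ↑y = F ↑x0 ↑y0 → y = y0)) →
      (∀ (x : ΩX) (y : ΩY), F ↑x ↑y = F ↑x0 ↑y0 →
        ∃ T ∈ 𝒯, T.1 x0 = x ∧ T.2 y0 = y)) ∧
    -- Necessity under the extra assumptions
    ((∀ y' : Y, (∀ x ∈ ΩX, F x y' = 0) → y' = 0) →
     (∀ T ∈ 𝒯, T.1 x0 = x0 → T.1 = (id : ΩX → ΩX)) →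
     (∀ (x : ΩX) (y : ΩY), F ↑x ↑y = F ↑x0 ↑y0 →
        ∃ T ∈ 𝒯, T.1 x0 = x ∧ T.2 y0 = y) →
     ((∀ (x : ΩX) (y : ΩY), F ↑x ↑y = F ↑x0 ↑y0 → ∃ T ∈ 𝒯, T.1 x0 = x) ∧
      (∀ y : ΩY, F ↑x0 ↑y = F ↑x0 ↑y0 → y = y0))) :=
  stmt_2_general F ΩX ΩY 𝒯 hinv hF x0 y0
end

section
/- Let ω = exp(−2πi/n) and let F ∈ ℂ^{n×n} be the normalized DFT matrix. Let λ0 ∈ ℂ^n be non-vanishing and let X0 ∈ ℂ^{n×N} have at most s nonzero rows. Suppose (λ0, X0) is identifiable up to the scaling–shift transformation group: every pair (λ, X) ∈ ℂ^n × ℂ^{n×N} with X jointly s-sparse and diag(λ)·F·X = diag(λ0)·F·X0 satisfies λ_j = λ0_j/(σ·ω^{jk}) and X_{j,:} = σ·X0_{j−k,:} for all j ∈ ℤ/n, for some nonzero σ ∈ ℂ and some k ∈ ℤ/n. Then N·(n−s) ≥ n−1. -/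
/-!
Suppose `N (n - s) < n - 1` and let `Z` be a set of `n - s` zero rows of `X0`. For non-vanishing
`μ`, the pair `(λ0 / μ, F⁻¹ diag(μ) F X0)` produces the same measurements as `(λ0, X0)`. Asking the
rows in `Z` of `F⁻¹ diag(μ) F X0` to vanish imposes only `N (n - s) < n - 1` linear conditions on
`μ ∈ ℂⁿ`; the constant vector `1` satisfies them, so some `w` independent of `1` does too. For all
but finitely many `t`, `μ = 1 + t w` is non-vanishing and not a multiple of a character
`j ↦ ω^{jk}`, so the resulting pair is jointly `s`-sparse and consistent with the measurements, but
not a scaling–shift of `(λ0, X0)`.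
-/

open Matrix Module Submodule

section LinearAlgebra

variable {K V W : Type*} [Field K] [AddCommGroup V] [Module K V] [AddCommGroup W] [Module K W]

lemma exists_mem_ker_notMem_span_singleton [FiniteDimensional K V] [FiniteDimensional K W]
    (T : V →ₗ[K] W) (h : finrank K W + 1 < finrank K V) (v : V) :
    ∃ w ∈ LinearMap.ker T, w ∉ K ∙ v := by
  by_contra! hker
  have hrank := T.finrank_range_add_finrank_ker
  have hrange := (LinearMap.range T).finrank_le
  have hspan : finrank K (LinearMap.ker T) ≤ 1 :=
    (Submodule.finrank_mono hker).trans ((finrank_span_le_card ({v} : Set V)).trans (by simp))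
  omega

lemma subsingleton_setOf_add_smul_mem_span_singleton {u w : V} (hu : u ≠ 0) (hw : w ∉ K ∙ u)
    (χ : V) : {t : K | u + t • w ∈ K ∙ χ}.Subsingleton := by
  intro t₁ (h₁ : u + t₁ • w ∈ K ∙ χ) t₂ (h₂ : u + t₂ • w ∈ K ∙ χ)
  by_contra hne
  have hwχ : w ∈ K ∙ χ := by
    have h := sub_mem h₁ h₂
    rwa [add_sub_add_left_eq_sub, ← sub_smul, smul_mem_iff _ (sub_ne_zero.2 hne)] at h
  have huχ : u ∈ K ∙ χ := by simpa using sub_mem h₁ (smul_mem _ t₁ hwχ)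
  obtain ⟨a, rfl⟩ := mem_span_singleton.1 huχ
  obtain ⟨b, rfl⟩ := mem_span_singleton.1 hwχ
  have ha : a ≠ 0 := by rintro rfl; simp at hu
  exact hw (mem_span_singleton.2 ⟨b * a⁻¹, by rw [smul_smul, inv_mul_cancel_right₀ ha]⟩)

end LinearAlgebra

lemma subsingleton_setOf_add_mul_eq_zero {K : Type*} [Field K] {a : K} (ha : a ≠ 0) (b : K) :
    {t : K | a + t * b = 0}.Subsingleton := by
  intro t₁ (h₁ : a + t₁ * b = 0) t₂ (h₂ : a + t₂ * b = 0)
  have hb : b ≠ 0 := by rintro rfl; simp_all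
  exact mul_right_cancel₀ hb (by linear_combination h₁ - h₂)

lemma exists_add_smul_ne_zero_notMem_span_singleton {K ι κ : Type*} [Field K] [Infinite K]
    [Finite ι] [Finite κ] {u w : ι → K} (hu : ∀ i, u i ≠ 0) (hw : w ∉ K ∙ u) (χ : κ → ι → K) :
    ∃ t : K, (∀ i, u i + t * w i ≠ 0) ∧ ∀ k, u + t • w ∉ K ∙ χ k := by
  have hu₀ : u ≠ 0 := by
    rintro rfl
    have : IsEmpty ι := ⟨fun i => hu i rfl⟩
    exact hw (by simp [Subsingleton.elim w 0])
  have hbad : ((⋃ i, {t : K | u i + t * w i = 0}) ∪ ⋃ k, {t : K | u + t • w ∈ K ∙ χ k}).Finite :=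
    (Set.finite_iUnion fun i => (subsingleton_setOf_add_mul_eq_zero (hu i) (w i)).finite).union
      (Set.finite_iUnion fun k =>
        (subsingleton_setOf_add_smul_mem_span_singleton hu₀ hw (χ k)).finite)
  obtain ⟨t, ht⟩ := hbad.infinite_compl.nonempty
  simp only [Set.mem_compl_iff, Set.mem_union, Set.mem_iUnion, Set.mem_ofPred_eq, not_or,
    not_exists] at ht
  exact ⟨t, ht⟩

section Rows

variable {m p R : Type*} [Fintype m] [Zero R]

lemma exists_finset_card_eq_forall_row_eq_zero {s : ℕ} (X : Matrix m p R)
    (hX : {i | X i ≠ 0}.ncard ≤ s) :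
    ∃ Z : Finset m, Z.card = Fintype.card m - s ∧ ∀ i ∈ Z, X i = 0 := by
  classical
  have hcard : Fintype.card m - s ≤ (Finset.univ.filter fun i => X i = 0).card := by
    have := Finset.card_filter_add_card_filter_not (s := Finset.univ) (fun i => X i = 0)
    rw [Set.ncard_eq_toFinset_card'] at hX
    simp only [Set.toFinset_ofPred, Finset.card_univ, ne_eq] at hX this
    omega
  obtain ⟨Z, hZ, hZcard⟩ := Finset.exists_subset_card_eq hcard
  exact ⟨Z, hZcard, fun i hi => (Finset.mem_filter.1 (hZ hi)).2⟩

lemma ncard_row_ne_zero_le (X : Matrix m p R) (Z : Finset m) (hZ : ∀ i ∈ Z, X i = 0) :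
    {i | X i ≠ 0}.ncard ≤ Fintype.card m - Z.card := by
  classical
  have hsub : {i | X i ≠ 0} ⊆ ↑Zᶜ := fun i hi => by simpa using mt (hZ i) hi
  simpa only [Set.ncard_coe_finset, Finset.card_compl] using Set.ncard_le_ncard hsub

end Rows

lemma exists_notMem_span_one_forall_row_mul_diagonal_mul_eq_zero {K m n p : Type*} [Field K]
    [Fintype n] [DecidableEq n] [Fintype p] (A : Matrix m n K) (B : Matrix n p K) (Z : Finset m)
    (h : Z.card * Fintype.card p + 1 < Fintype.card n) :
    ∃ w : n → K, w ∉ K ∙ 1 ∧ ∀ i ∈ Z, (A * diagonal w * B) i = 0 := by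
  let T : (n → K) →ₗ[K] (Z → p → K) := LinearMap.funLeft K (p → K) ((↑) : Z → m) ∘ₗ
    mulRightLinearMap m K B ∘ₗ mulLeftLinearMap n K A ∘ₗ diagonalLinearMap n K K
  obtain ⟨w, hwT, hw⟩ :=
    exists_mem_ker_notMem_span_singleton T (by simpa [finrank_pi_fintype] using h) 1
  exact ⟨w, hw, fun i hi => congrFun (LinearMap.mem_ker.1 hwT) ⟨i, hi⟩⟩

lemma mul_diagonal_add_smul_mul {K m n p : Type*} [Field K] [Fintype n] [DecidableEq n]
    (A : Matrix m n K) (B : Matrix n p K) (u w : n → K) (t : K) :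
    A * diagonal (u + t • w) * B = A * diagonal u * B + t • (A * diagonal w * B) := by
  rw [show diagonal (u + t • w) = diagonal u + t • diagonal w by
      rw [← diagonal_smul, diagonal_add]; rfl,
    Matrix.mul_add, Matrix.add_mul, Matrix.mul_smul, Matrix.smul_mul]

lemma diagonal_div_mul_mul_nonsing_inv_diagonal_mul {K n p : Type*} [Field K] [Fintype n]
    [DecidableEq n] {F : Matrix n n K} (hF : IsUnit F) {μ : n → K} (hμ : ∀ j, μ j ≠ 0)
    (lam0 : n → K) (X0 : Matrix n p K) :
    diagonal (fun j => lam0 j / μ j) * F * (F⁻¹ * diagonal μ * (F * X0)) =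
      diagonal lam0 * F * X0 := by
  rw [isUnit_iff_isUnit_det] at hF
  simp only [Matrix.mul_assoc, mul_nonsing_inv_cancel_left _ _ hF]
  simp only [← Matrix.mul_assoc, diagonal_mul_diagonal, div_mul_cancel₀ _ (hμ _)]

lemma pow_val_eq_stdAddChar_neg {n : ℕ} [NeZero n] {ω : ℂ}
    (hω : ω = Complex.exp (-2 * Real.pi * Complex.I / n)) (a : ZMod n) :
    ω ^ a.val = ZMod.stdAddChar (-a) := by
  rw [AddChar.map_neg_eq_inv, ZMod.stdAddChar_apply, ZMod.toCircle_apply, hω,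
    ← Complex.exp_nat_mul, ← Complex.exp_neg]
  congr 1
  ring

lemma isUnit_of_apply_eq_dft {n : ℕ} [NeZero n] {ω : ℂ}
    (hω : ω = Complex.exp (-2 * Real.pi * Complex.I / n)) {F : Matrix (ZMod n) (ZMod n) ℂ}
    (hF : ∀ j k : ZMod n, F j k = ω ^ (j * k).val / (Real.sqrt n : ℂ)) : IsUnit F := by
  have hmulVec : F.mulVec = fun v => (Real.sqrt n : ℂ)⁻¹ • ZMod.dft v := by
    funext v j
    simp [mulVec, dotProduct, hF, ZMod.dft_apply, Finset.mul_sum, pow_val_eq_stdAddChar_neg hω,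
      mul_comm, div_eq_mul_inv, mul_left_comm]
  rw [← mulVec_injective_iff_isUnit, hmulVec]
  exact (smul_right_injective _ (by simp [NeZero.ne n])).comp ZMod.dft.injective

/-- Necessary sample complexity for BGPC with the DFT matrix and
a joint sparsity constraint: identifiability up to scaling and circular shift
implies N·(n−s) ≥ n−1. -/
theorem stmt_11 {n N s : ℕ} [NeZero n]
    (ω : ℂ) (hω : ω = Complex.exp (-2 * Real.pi * Complex.I / n))
    (F : Matrix (ZMod n) (ZMod n) ℂ)
    (hF : ∀ j k : ZMod n, F j k = ω ^ (j * k).val / (Real.sqrt n : ℂ))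
    (lam0 : ZMod n → ℂ) (X0 : Matrix (ZMod n) (Fin N) ℂ)
    (hlam0 : ∀ j, lam0 j ≠ 0)
    (hX0 : Set.ncard {j : ZMod n | (fun k => X0 j k) ≠ 0} ≤ s)
    (hident : ∀ (lam : ZMod n → ℂ) (X : Matrix (ZMod n) (Fin N) ℂ),
      Set.ncard {j : ZMod n | (fun k => X j k) ≠ 0} ≤ s →
      Matrix.diagonal lam * F * X = Matrix.diagonal lam0 * F * X0 →
      ∃ σ : ℂ, σ ≠ 0 ∧ ∃ k : ZMod n,
        (∀ j : ZMod n, lam j = lam0 j / (σ * ω ^ (j * k).val)) ∧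
        (∀ j : ZMod n, (fun t => X j t) = σ • (fun t => X0 (j - k) t))) :
    N * (n - s) ≥ n - 1 := by
  by_contra! hlt
  have hFu : IsUnit F := isUnit_of_apply_eq_dft hω hF
  obtain ⟨Z, hZcard, hZ⟩ := exists_finset_card_eq_forall_row_eq_zero X0 hX0
  obtain ⟨w, hw, hwZ⟩ := exists_notMem_span_one_forall_row_mul_diagonal_mul_eq_zero F⁻¹ (F * X0) Z
    (by rw [hZcard, ZMod.card, Fintype.card_fin, mul_comm]; omega)
  obtain ⟨t, hμ, hμχ⟩ := exists_add_smul_ne_zero_notMem_span_singleton (u := 1)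
    (fun _ => one_ne_zero) hw (fun k j => ω ^ (j * k).val)
  set μ : ZMod n → ℂ := 1 + t • w
  have hXZ : ∀ i ∈ Z, (F⁻¹ * diagonal μ * (F * X0)) i = 0 := fun i hi => by
    rw [mul_diagonal_add_smul_mul, Pi.one_def, diagonal_one, Matrix.mul_one,
      nonsing_inv_mul_cancel_left _ _ ((isUnit_iff_isUnit_det F).1 hFu)]
    ext j
    simp [congrFun (hZ i hi) j, congrFun (hwZ i hi) j]
  obtain ⟨σ, -, k, hlam, -⟩ := hident (fun j => lam0 j / μ j) _
    ((ncard_row_ne_zero_le _ Z hXZ).trans (by rw [hZcard, ZMod.card]; omega))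
    (diagonal_div_mul_mul_nonsing_inv_diagonal_mul hFu hμ lam0 X0)
  refine hμχ k (mem_span_singleton.2 ⟨σ, funext fun j => ?_⟩)
  show σ * ω ^ (j * k).val = μ j
  exact inv_inj.1 <|
    mul_left_cancel₀ (hlam0 j) (by simpa only [div_eq_mul_inv] using (hlam j).symm)
end

section
/- Let ω = exp(−2πi/n) and let F ∈ ℂ^{n×n} be the normalized DFT matrix. Let λ0 ∈ ℂ^n be non-vanishing, and let X0 ∈ ℂ^{n×N} be a nonzero matrix whose joint support J ⊆ ℤ/n (with |J| = s) is periodic. Then (λ0, X0) is not identifiable up to the scaling–shift transformation group: there exists a pair (λ1, X1) ∈ ℂ^n × ℂ^{n×N} such that X1 is jointly s-sparse, diag(λ1)·F·X1 = diag(λ0)·F·X0, and there is no nonzero σ ∈ ℂ and k ∈ ℤ/n with λ1_j = λ0_j/(σ·ω^{jk}) for all j ∈ ℤ/n and X1_{j,:} = σ·X0_{j−k,:} for all j ∈ ℤ/n. -/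
open Matrix

/-!
A period `ℓ` of the joint support `J` lets us add to `X0` its own `ℓ`-shift without leaving `J`.
The DFT turns the shift by `ℓ` into modulation by the character `j ↦ ω^{jℓ}`, so
`X1 = 2 X0 + X0(· - ℓ)` satisfies `F X1 = diag(2 + ω^{jℓ}) F X0`, and `λ1 = λ0 / (2 + ω^{jℓ})`
reproduces the measurements. A scaling–shift equivalence would make `2 + ω^{jℓ}` a constant multiple
`σ ω^{jk}` of a character; comparing the values at `j = 0, 1, 2` gives `2 (ω^ℓ - 1)^2 = 0`.
-/

theorem Complex.isPrimitiveRoot_exp_neg (n : ℕ) (h0 : n ≠ 0) :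
    IsPrimitiveRoot (Complex.exp (-2 * Real.pi * Complex.I / n)) n := by
  have h := (Complex.isPrimitiveRoot_exp n h0).inv
  rwa [← Complex.exp_neg, ← neg_div, ← neg_mul, ← neg_mul] at h

theorem mul_submatrix_sub_eq_diagonal_mul {ι κ G R : Type*} [Fintype ι] [DecidableEq ι]
    [AddGroup G] [Fintype G] [Semiring R] (F : Matrix ι G R) (X : Matrix G κ R)
    (χ : ι → R) (ℓ : G) (hF : ∀ j m, F j (m + ℓ) = χ j * F j m) :
    F * X.submatrix (· - ℓ) id = diagonal χ * F * X := by
  ext j t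
  rw [Matrix.mul_assoc, diagonal_mul]
  simp only [mul_apply, submatrix_apply, id_eq, Finset.mul_sum]
  rw [← Equiv.sum_comp (Equiv.addRight ℓ)]
  simp only [Equiv.coe_addRight, add_sub_cancel_right, hF, mul_assoc]

theorem mul_smul_add_submatrix_sub_eq_diagonal_mul {ι κ G R : Type*} [Fintype ι]
    [DecidableEq ι] [AddGroup G] [Fintype G] [CommSemiring R] (F : Matrix ι G R)
    (X : Matrix G κ R) (χ : ι → R) (ℓ : G) (hF : ∀ j m, F j (m + ℓ) = χ j * F j m) (c : R) :
    F * (c • X + X.submatrix (· - ℓ) id) = diagonal (fun j => c + χ j) * (F * X) := by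
  rw [Matrix.mul_add, Matrix.mul_smul, mul_submatrix_sub_eq_diagonal_mul F X χ ℓ hF,
    smul_eq_diagonal_mul, Matrix.mul_assoc, ← Matrix.add_mul, diagonal_add]

theorem setOf_smul_add_submatrix_sub_ne_zero_subset {G κ R : Type*} [AddGroup G] [Semiring R]
    (X : Matrix G κ R) (c : R) {ℓ : G}
    (hX : Set.MapsTo (· + ℓ) {j | X j ≠ 0} {j | X j ≠ 0}) :
    {j | (c • X + X.submatrix (· - ℓ) id) j ≠ 0} ⊆ {j | X j ≠ 0} := by
  intro j hj
  by_contra hXj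
  have hshift : X (j - ℓ) = 0 := by
    by_contra h
    exact hXj (by simpa using hX h)
  simp only [Set.mem_ofPred_eq, not_not] at hXj hj
  exact hj (by ext t; simp [congrFun hXj t, congrFun hshift t])

theorem diagonal_div_mul_eq_of_mul_eq_diagonal_mul {ι κ K : Type*} [Fintype ι] [DecidableEq ι]
    [Field K] {F : Matrix ι ι K} {X₀ X₁ : Matrix ι κ K} {μ : ι → K} (hμ : ∀ j, μ j ≠ 0)
    (h : F * X₁ = diagonal μ * (F * X₀)) (lam : ι → K) :
    diagonal (fun j => lam j / μ j) * F * X₁ = diagonal lam * F * X₀ := by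
  rw [Matrix.mul_assoc, h, ← Matrix.mul_assoc, diagonal_mul_diagonal, Matrix.mul_assoc]
  congr 2
  funext j
  exact div_mul_cancel₀ _ (hμ j)

theorem AddChar.not_forall_two_add_eq_mul {A K : Type*} [AddMonoid A] [Field K] [CharZero K]
    (φ χ : AddChar A K) {a : A} (ha : φ a ≠ 1) (σ : K) : ¬ ∀ j, 2 + φ j = σ * χ j := by
  intro h
  have h₀ := h 0
  have h₁ := h a
  have h₂ := h (a + a)
  simp only [AddChar.map_zero_eq_one, AddChar.map_add_eq_mul] at h₀ h₂
  have hsq : (φ a - 1) ^ 2 = 0 := by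
    linear_combination (-1 / 2 : K) * ((2 + φ a + σ * χ a) * h₁ - 3 * h₂ - σ * χ a ^ 2 * h₀)
  exact ha (sub_eq_zero.mp (pow_eq_zero_iff two_ne_zero |>.mp hsq))

theorem stmt_12_general {n N s : ℕ} [NeZero n]
    (ω : ℂ) (hω : ω = Complex.exp (-2 * Real.pi * Complex.I / n))
    (F : Matrix (ZMod n) (ZMod n) ℂ)
    (hF : ∀ j k : ZMod n, F j k = ω ^ (j * k).val / (Real.sqrt n : ℂ))
    (lam0 : ZMod n → ℂ) (X0 : Matrix (ZMod n) (Fin N) ℂ)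
    (hlam0 : ∀ j, lam0 j ≠ 0)
    (hs : Set.ncard {j : ZMod n | (fun k => X0 j k) ≠ 0} = s)
    (hper : ∃ ℓ : ZMod n, ℓ ≠ 0 ∧
      (fun j => j + ℓ) '' {j : ZMod n | (fun k => X0 j k) ≠ 0} =
        {j : ZMod n | (fun k => X0 j k) ≠ 0}) :
    ∃ (lam1 : ZMod n → ℂ) (X1 : Matrix (ZMod n) (Fin N) ℂ),
      Set.ncard {j : ZMod n | (fun k => X1 j k) ≠ 0} ≤ s ∧
      Matrix.diagonal lam1 * F * X1 = Matrix.diagonal lam0 * F * X0 ∧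
      ¬ ∃ σ : ℂ, σ ≠ 0 ∧ ∃ k : ZMod n,
        (∀ j : ZMod n, lam1 j = lam0 j / (σ * ω ^ (j * k).val)) ∧
        (∀ j : ZMod n, (fun t => X1 j t) = σ • (fun t => X0 (j - k) t)) := by
  obtain ⟨ℓ, hℓ, hJ⟩ := hper
  have hprim : IsPrimitiveRoot ω n := hω ▸ Complex.isPrimitiveRoot_exp_neg n (NeZero.ne n)
  set ψ := AddChar.zmodChar n hprim.pow_eq_one
  set χ := ψ.mulShift ℓ
  have hμ : ∀ j, 2 + χ j ≠ 0 := fun j h => by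
    simpa [AddChar.norm_apply] using congrArg norm (eq_neg_of_add_eq_zero_right h)
  have hF_shift : ∀ j m, F j (m + ℓ) = χ j * F j m := fun j m => by
    rw [hF, hF, AddChar.mulShift_apply, mul_comm ℓ j]
    change ψ (j * (m + ℓ)) / _ = ψ (j * ℓ) * (ψ (j * m) / _)
    rw [mul_add, AddChar.map_add_eq_mul]
    ring
  refine ⟨fun j => lam0 j / (2 + χ j), (2 : ℂ) • X0 + X0.submatrix (· - ℓ) id, ?_,
    diagonal_div_mul_eq_of_mul_eq_diagonal_mul hμ
      (mul_smul_add_submatrix_sub_eq_diagonal_mul F X0 χ ℓ hF_shift 2) lam0, ?_⟩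
  · rw [← hs]
    exact Set.ncard_le_ncard
      (setOf_smul_add_submatrix_sub_ne_zero_subset X0 2 (Set.mapsTo_iff_image_subset.mpr hJ.subset))
      (Set.toFinite _)
  · rintro ⟨σ, -, k, hlam, -⟩
    refine χ.not_forall_two_add_eq_mul (ψ.mulShift k) (a := 1) ?_ σ fun j => ?_
    · simpa [χ, ψ, AddChar.zmodChar_apply] using
        hprim.pow_ne_one_of_pos_of_lt ((ZMod.val_ne_zero ℓ).mpr hℓ) (ZMod.val_lt ℓ)
    · have h : lam0 j / (2 + χ j) = lam0 j / (σ * ω ^ (j * k).val) := hlam j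
      rw [div_eq_mul_inv, div_eq_mul_inv] at h
      rw [inv_inj.mp (mul_left_cancel₀ (hlam0 j) h), AddChar.mulShift_apply, mul_comm k j]
      rfl

/-- If the joint support of X0 is periodic, then (λ0, X0) is not
identifiable up to the scaling–shift transformation group. -/
theorem stmt_12 {n N s : ℕ} [NeZero n]
    (ω : ℂ) (hω : ω = Complex.exp (-2 * Real.pi * Complex.I / n))
    (F : Matrix (ZMod n) (ZMod n) ℂ)
    (hF : ∀ j k : ZMod n, F j k = ω ^ (j * k).val / (Real.sqrt n : ℂ))
    (lam0 : ZMod n → ℂ) (X0 : Matrix (ZMod n) (Fin N) ℂ)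
    (hlam0 : ∀ j, lam0 j ≠ 0)
    (hX0 : X0 ≠ 0)
    (hs : Set.ncard {j : ZMod n | (fun k => X0 j k) ≠ 0} = s)
    (hper : ∃ ℓ : ZMod n, ℓ ≠ 0 ∧
      (fun j => j + ℓ) '' {j : ZMod n | (fun k => X0 j k) ≠ 0} =
        {j : ZMod n | (fun k => X0 j k) ≠ 0}) :
    ∃ (lam1 : ZMod n → ℂ) (X1 : Matrix (ZMod n) (Fin N) ℂ),
      Set.ncard {j : ZMod n | (fun k => X1 j k) ≠ 0} ≤ s ∧
      Matrix.diagonal lam1 * F * X1 = Matrix.diagonal lam0 * F * X0 ∧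
      ¬ ∃ σ : ℂ, σ ≠ 0 ∧ ∃ k : ZMod n,
        (∀ j : ZMod n, lam1 j = lam0 j / (σ * ω ^ (j * k).val)) ∧
        (∀ j : ZMod n, (fun t => X1 j t) = σ • (fun t => X0 (j - k) t)) :=
  stmt_12_general ω hω F hF lam0 X0 hlam0 hs hper
end

section
/- If n ≥ 4 and the index set J ⊆ ℤ/n is friendly, then |J| ≥ 3. -/
/-!
The translates of `∅` cover nothing, and distinct translates of a point are disjoint, so the
empty set fails the covering condition and a point fails connectivity. For `J = {a, a + d}`,
the translates `J + k` and `J + k'` meet iff `k - k' ∈ J - J = {0, d, -d}`. If `2d = 0`, the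
shifts `{0, d}ᶜ` form a `d`-stable set, so their translates of `J` cover only the `n - 2`
points `a + {0, d}ᶜ`; otherwise, among the shifts `{0, 2d}ᶜ` the shift `d` has no neighbour.
-/

/-- An index set `J ⊆ ℤ/n` with `|J| = s` is friendly if for every choice of
`n − s` distinct shifts, the shifted copies of `J` cover at least `n − 1`
indices and are connected (two shifted copies being adjacent when they
intersect). By convention, the full set `ℤ/n` is friendly. -/
def Friendly {n : ℕ} [NeZero n] (J : Set (ZMod n)) : Prop :=
  J = Set.univ ∨
    ∀ K : Finset (ZMod n), K.card = n - J.ncard →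
      (n - 1 ≤ Set.ncard (⋃ k ∈ K, (fun j => j + k) '' J)) ∧
      (SimpleGraph.fromRel (fun k1 k2 : {k // k ∈ K} =>
        (((fun j => j + (k1 : ZMod n)) '' J) ∩
          ((fun j => j + (k2 : ZMod n)) '' J)).Nonempty)).Connected

open Finset
open scoped Pointwise

section Translates

variable {G : Type*} [AddCommGroup G]

lemma image_add_right_inter_nonempty_iff (J : Set G) (k₁ k₂ : G) :
    ((fun j => j + k₁) '' J ∩ (fun j => j + k₂) '' J).Nonempty ↔ k₁ - k₂ ∈ J - J := by
  constructor
  · rintro ⟨_, ⟨j₁, hj₁, rfl⟩, ⟨j₂, hj₂, h⟩⟩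
    exact ⟨j₂, hj₂, j₁, hj₁, sub_eq_sub_iff_add_eq_add.mpr (by rw [add_comm k₁]; exact h)⟩
  · rintro ⟨j₂, hj₂, j₁, hj₁, h⟩
    refine ⟨j₁ + k₁, ⟨j₁, hj₁, rfl⟩, ⟨j₂, hj₂, ?_⟩⟩
    rw [add_comm j₁]
    exact sub_eq_sub_iff_add_eq_add.mp h

def translateGraph (J : Set G) (K : Finset G) : SimpleGraph {k // k ∈ K} :=
  SimpleGraph.fromRel fun k₁ k₂ =>
    (((fun j => j + (k₁ : G)) '' J) ∩ ((fun j => j + (k₂ : G)) '' J)).Nonempty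

lemma translateGraph_not_connected {J : Set G} {K : Finset G} {k₀ : G} (hk₀ : k₀ ∈ K)
    (hK : 1 < #K) (hiso : ∀ k ∈ K, k - k₀ ∈ J - J → k = k₀) :
    ¬ (translateGraph J K).Connected := by
  intro hconn
  have : Nontrivial K := (one_lt_card_iff_nontrivial.mp hK).coe_sort
  obtain ⟨⟨k, hk⟩, hne, hmeet⟩ := hconn.preconnected.exists_adj_of_nontrivial ⟨k₀, hk₀⟩
  beta_reduce at hmeet
  rw [Set.inter_comm, or_self, image_add_right_inter_nonempty_iff] at hmeet
  exact hne (Subtype.ext (hiso k hk hmeet).symm)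

lemma translateGraph_singleton_not_connected (a : G) {K : Finset G} (hK : 1 < #K) :
    ¬ (translateGraph {a} K).Connected := by
  obtain ⟨k₀, hk₀⟩ := card_pos.mp (by omega : 0 < #K)
  refine translateGraph_not_connected hk₀ hK fun k _ h => ?_
  rwa [Set.singleton_sub_singleton, sub_self, Set.mem_singleton_iff, sub_eq_zero] at h

lemma translateGraph_pair_not_connected (a : G) {d : G} {K : Finset G} (hK : 1 < #K)
    (hdK : d ∈ K) (h0K : 0 ∉ K) (h2dK : d + d ∉ K) :
    ¬ (translateGraph {a, a + d} K).Connected := by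
  refine translateGraph_not_connected hdK hK fun k hk h => ?_
  obtain ⟨x, hx, y, hy, hxy⟩ := h
  have hdiff : k - d = 0 ∨ k - d = d ∨ k - d = -d := by
    rcases hx with rfl | rfl <;> rcases hy with rfl | rfl <;> simp [← hxy]
  rcases hdiff with h | h | h
  · exact sub_eq_zero.mp h
  · exact absurd (by rwa [sub_eq_iff_eq_add.mp h] at hk) h2dK
  · exact absurd (by rwa [sub_eq_iff_eq_add.mp h, neg_add_cancel] at hk) h0K

lemma ncard_iUnion_image_add_right_pair_le (a d : G) {K : Finset G}
    (hK : ∀ k ∈ K, k + d ∈ K) :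
    (⋃ k ∈ K, (fun j => j + k) '' ({a, a + d} : Set G)).ncard ≤ #K := by
  rw [← Set.ncard_coe_finset K]
  refine (Set.ncard_le_ncard (Set.iUnion₂_subset fun k hk => ?_)
    (K.finite_toSet.image (a + ·))).trans (Set.ncard_image_le K.finite_toSet)
  rintro _ ⟨j, rfl | rfl, rfl⟩
  · exact ⟨k, hk, rfl⟩
  · exact ⟨k + d, hK k hk, by beta_reduce; abel⟩

lemma add_mem_compl_pair [Fintype G] [DecidableEq G] {d k : G} (h2d : d + d = 0)
    (hk : k ∈ ({0, d}ᶜ : Finset G)) : k + d ∈ ({0, d}ᶜ : Finset G) := by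
  simp only [mem_compl, mem_insert, mem_singleton, not_or] at hk ⊢
  refine ⟨fun h => hk.2 ?_, fun h => hk.1 ?_⟩
  · rw [← add_left_inj d, h, h2d]
  · rwa [add_eq_right] at h

end Translates

/-- If n ≥ 4 and J ⊆ ℤ/n is friendly, then |J| ≥ 3. -/
theorem stmt_15 {n : ℕ} [NeZero n] (hn : 4 ≤ n) (J : Set (ZMod n))
    (hJ : Friendly J) : 3 ≤ J.ncard := by
  rcases hJ with rfl | hJ
  · rw [Set.ncard_univ, Nat.card_zmod]; omega
  have card_compl_pair {c : ZMod n} (hc : c ≠ 0) : #({0, c}ᶜ) = n - 2 := by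
    rw [card_compl, card_pair hc.symm, ZMod.card]
  by_contra! hlt
  interval_cases h : J.ncard
  · obtain rfl := (Set.ncard_eq_zero).mp h
    obtain ⟨hcover, -⟩ := hJ univ (by simp)
    simp at hcover
    omega
  · obtain ⟨a, rfl⟩ := Set.ncard_eq_one.mp h
    have hK : #({0}ᶜ : Finset (ZMod n)) = n - 1 := by simp [card_compl]
    exact translateGraph_singleton_not_connected a (by omega) (hJ _ hK).2
  · obtain ⟨a, b, hab, rfl⟩ := Set.ncard_eq_two.mp h
    obtain ⟨d, rfl⟩ : ∃ d, b = a + d := ⟨b - a, by abel⟩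
    have hd : d ≠ 0 := by simpa using hab
    by_cases h2d : d + d = 0
    · have hcover := (hJ {0, d}ᶜ (card_compl_pair hd)).1
      have hsmall := ncard_iUnion_image_add_right_pair_le a d fun k => add_mem_compl_pair h2d
      rw [card_compl_pair hd] at hsmall
      omega
    · have hdd : d ≠ d + d := by simpa [eq_comm] using hd
      refine translateGraph_pair_not_connected a ?_ ?_ ?_ ?_
        (hJ {0, d + d}ᶜ (card_compl_pair h2d)).2
      · rw [card_compl_pair h2d]; omega
      all_goals simp [hd, hdd]
end

section
/- If J ⊆ ℤ/n satisfies |J| ≥ 3 and J is contiguous, i.e., J = {a, a+1, …, a+|J|−1} (mod n) for some a ∈ ℤ/n, then J is friendly. -/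
open Finset

theorem SimpleGraph.connected_of_forall_exists_adj_lt {V : Type*} {G : SimpleGraph V}
    (f : V → ℕ) (b : V) (h : ∀ v, v ≠ b → ∃ w, G.Adj v w ∧ f w < f v) : G.Connected := by
  have : Nonempty V := ⟨b⟩
  have hreach : ∀ m, ∀ v, f v = m → G.Reachable v b := by
    intro m
    induction m using Nat.strong_induction_on with
    | _ m ih =>
      intro v hv
      by_cases hvb : v = b
      · exact hvb ▸ SimpleGraph.Reachable.refl v
      · obtain ⟨w, hvw, hw⟩ := h v hvb
        exact hvw.reachable.trans (ih (f w) (hv ▸ hw) w rfl)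
  exact ⟨fun u v => (hreach _ u rfl).trans (hreach _ v rfl).symm⟩

section

variable {n : ℕ}

lemma ZMod.natCast_injOn_Iio : Set.InjOn (Nat.cast : ℕ → ZMod n) (Set.Iio n) := by
  intro i hi j hj h
  simpa [ZMod.natCast_eq_natCast_iff', Nat.mod_eq_of_lt hi, Nat.mod_eq_of_lt hj] using h

lemma card_image_sub_natCast (x : ZMod n) {I : Finset ℕ} (hI : ∀ i ∈ I, i < n) :
    (I.image fun i : ℕ => x - i).card = I.card :=
  card_image_of_injOn fun _ hi _ hj h =>
    ZMod.natCast_injOn_Iio (hI _ hi) (hI _ hj) (sub_right_injective h)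

lemma eq_of_image_sub_range_eq {s : ℕ} (hs : 0 < s) (hsn : s < n) {x y : ZMod n}
    (h : (range s).image (fun i : ℕ => x - i) = (range s).image (fun i : ℕ => y - i)) :
    x = y := by
  obtain ⟨i, hi, rfl⟩ : ∃ i < s, x - i = y := by
    simpa [← h] using mem_image_of_mem (fun i : ℕ => y - i) (mem_range.2 hs)
  rcases i with _ | i
  · simp
  -- the successor `x - i` of the top end `x - (i + 1)` would lie in the interval below it
  obtain ⟨j, hj, hji⟩ : ∃ j < s, x - (i + 1 : ℕ) - j = x - i := by
    simpa [h] using mem_image_of_mem (fun i : ℕ => x - i) (mem_range.2 (by omega : i < s))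
  have hj0 : ((j + 1 : ℕ) : ZMod n) = 0 := by
    push_cast at hji ⊢
    linear_combination -hji
  rw [ZMod.natCast_eq_zero_iff] at hj0
  exact absurd (Nat.le_of_dvd (by omega) hj0) (by omega)

lemma subsingleton_setOf_disjoint_image_sub_range [NeZero n] {s : ℕ} (hs : 0 < s) (hsn : s < n)
    {K : Finset (ZMod n)} (hK : K.card = n - s) :
    {x : ZMod n | Disjoint ((range s).image fun i : ℕ => x - i) K}.Subsingleton := by
  have hcompl : ∀ x : ZMod n, Disjoint ((range s).image fun i : ℕ => x - i) K →
      (range s).image (fun i : ℕ => x - i) = Kᶜ := fun x hx =>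
    eq_of_subset_of_card_le (subset_compl_iff_disjoint_right.2 hx) (by
      rw [card_compl, ZMod.card, hK,
        card_image_sub_natCast x fun i hi => (mem_range.1 hi).trans hsn, card_range]
      omega)
  intro x hx y hy
  exact eq_of_image_sub_range_eq hs hsn ((hcompl x hx).trans (hcompl y hy).symm)

lemma le_ncard_iUnion_image_add [NeZero n] {s : ℕ} (hs : 0 < s) (hsn : s < n) {a : ZMod n}
    {J : Set (ZMod n)} (hJ : J = (fun i : ℕ => a + (i : ZMod n)) '' {i | i < s})
    {K : Finset (ZMod n)} (hK : K.card = n - s) :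
    n - 1 ≤ (⋃ k ∈ K, (fun j => j + k) '' J).ncard := by
  subst hJ
  set U := ⋃ k ∈ K, (fun j => j + k) '' ((fun i : ℕ => a + (i : ZMod n)) '' {i | i < s})
  have hmissed : ∀ x ∈ Uᶜ, Disjoint ((range s).image fun i : ℕ => (x - a) - i) K := by
    intro x hx
    refine disjoint_left.2 fun y hy hyK => ?_
    obtain ⟨i, hi, rfl⟩ := mem_image.1 hy
    exact hx (Set.mem_biUnion hyK ⟨a + i, ⟨i, mem_range.1 hi, rfl⟩, by ring⟩)
  have hUc : Uᶜ.ncard ≤ 1 := (Set.ncard_le_one_iff).2 fun hx hy =>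
    sub_left_injective <|
      subsingleton_setOf_disjoint_image_sub_range hs hsn hK (hmissed _ hx) (hmissed _ hy)
  have hU := Set.ncard_add_ncard_compl U
  rw [Nat.card_eq_fintype_card, ZMod.card] at hU
  omega

lemma mem_image_sub_Ico_of_sub_eq_sub {s j j' : ℕ} {k k' : ZMod n} (hjj' : j < j')
    (hj's : j' < s) (h : k - j = k' - j') : k ∈ (Ico 1 s).image fun i : ℕ => k' - i :=
  mem_image.2 ⟨j' - j, mem_Ico.2 ⟨by omega, by omega⟩, by
    rw [Nat.cast_sub hjj'.le]
    linear_combination -h⟩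

lemma eq_of_disjoint_image_sub_Ico [NeZero n] {s : ℕ} (hs : 3 ≤ s) (hsn : s < n)
    {K : Finset (ZMod n)} (hK : K.card = n - s) {k k' : ZMod n} (hk : k ∈ K) (hk' : k' ∈ K)
    (hkK : Disjoint ((Ico 1 s).image fun j : ℕ => k - j) K)
    (hk'K : Disjoint ((Ico 1 s).image fun j : ℕ => k' - j) K) : k = k' := by
  by_contra hne
  have hdisj : Disjoint ((Ico 1 s).image fun j : ℕ => k - j)
      ((Ico 1 s).image fun j : ℕ => k' - j) := by
    refine disjoint_left.2 fun x hx hx' => ?_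
    obtain ⟨j, hj, rfl⟩ := mem_image.1 hx
    obtain ⟨j', hj', h⟩ := mem_image.1 hx'
    rw [mem_Ico] at hj hj'
    rcases lt_trichotomy j j' with hlt | rfl | hgt
    · exact disjoint_left.1 hk'K (mem_image_sub_Ico_of_sub_eq_sub hlt hj'.2 h.symm) hk
    · exact hne (sub_left_injective h).symm
    · exact disjoint_left.1 hkK (mem_image_sub_Ico_of_sub_eq_sub hgt hj.2 h) hk'
  have hcard := card_le_card (union_subset (subset_compl_iff_disjoint_right.2 hkK)
    (subset_compl_iff_disjoint_right.2 hk'K))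
  have hIco : ∀ i ∈ Ico 1 s, i < n := fun i hi => (mem_Ico.1 hi).2.trans hsn
  rw [card_union_of_disjoint hdisj, card_image_sub_natCast k hIco, card_image_sub_natCast k' hIco,
    Nat.card_Ico, card_compl, ZMod.card, hK] at hcard
  omega

lemma exists_base_forall_exists_sub_mem [NeZero n] {s : ℕ} (hs : 3 ≤ s) (hsn : s < n)
    {K : Finset (ZMod n)} (hK : K.card = n - s) :
    ∃ b ∈ K, ∀ k ∈ K, k ≠ b → ∃ j : ℕ, 1 ≤ j ∧ j < s ∧ j ≤ (k - b).val ∧ k - j ∈ K := by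
  obtain ⟨b, hb, hbK⟩ : ∃ b ∈ K, ∀ k ∈ K, k ≠ b →
      ¬ Disjoint ((Ico 1 s).image fun j : ℕ => k - j) K := by
    by_cases hex : ∃ b ∈ K, Disjoint ((Ico 1 s).image fun j : ℕ => b - j) K
    · obtain ⟨b, hb, hbd⟩ := hex
      exact ⟨b, hb, fun k hk hkb hkd =>
        hkb (eq_of_disjoint_image_sub_Ico hs hsn hK hk hb hkd hbd)⟩
    · push Not at hex
      obtain ⟨b, hb⟩ := card_pos.1 (by omega : 0 < K.card)
      exact ⟨b, hb, fun k hk _ => hex k hk⟩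
  refine ⟨b, hb, fun k hk hkb => ?_⟩
  by_cases hkbs : (k - b).val < s
  · refine ⟨(k - b).val, ?_, hkbs, le_rfl, by simpa using hb⟩
    exact Nat.one_le_iff_ne_zero.2 ((ZMod.val_ne_zero _).2 (sub_ne_zero.2 hkb))
  · obtain ⟨_, hx, hjK⟩ := not_disjoint_iff.1 (hbK k hk hkb)
    obtain ⟨j, hj, rfl⟩ := mem_image.1 hx
    rw [mem_Ico] at hj
    exact ⟨j, hj.1, hj.2, by omega, hjK⟩

end

lemma inter_image_add_nonempty {n s j : ℕ} (hj : j < s) (a k : ZMod n) :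
    (((fun x => x + k) '' ((fun i : ℕ => a + (i : ZMod n)) '' {i | i < s})) ∩
      ((fun x => x + (k + j)) '' ((fun i : ℕ => a + (i : ZMod n)) '' {i | i < s}))).Nonempty :=
  ⟨a + j + k, ⟨a + j, ⟨j, hj, rfl⟩, rfl⟩, ⟨a, ⟨0, (Nat.zero_le j).trans_lt hj, by simp⟩, by ring⟩⟩

lemma connected_fromRel_inter_image_add {n : ℕ} [NeZero n] {s : ℕ} (hs : 3 ≤ s) (hsn : s < n)
    {a : ZMod n} {J : Set (ZMod n)} (hJ : J = (fun i : ℕ => a + (i : ZMod n)) '' {i | i < s})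
    {K : Finset (ZMod n)} (hK : K.card = n - s) :
    (SimpleGraph.fromRel (fun k1 k2 : {k // k ∈ K} =>
      (((fun j => j + (k1 : ZMod n)) '' J) ∩
        ((fun j => j + (k2 : ZMod n)) '' J)).Nonempty)).Connected := by
  subst hJ
  obtain ⟨b, hb, hstep⟩ := exists_base_forall_exists_sub_mem hs hsn hK
  refine SimpleGraph.connected_of_forall_exists_adj_lt
    (fun v : {k // k ∈ K} => ((v : ZMod n) - b).val) ⟨b, hb⟩ fun ⟨k, hk⟩ hkb => ?_
  obtain ⟨j, hj1, hjs, hjk, hkj⟩ := hstep k hk fun h => hkb (Subtype.ext h)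
  refine ⟨⟨k - j, hkj⟩, ?_, ?_⟩
  · refine SimpleGraph.fromRel_adj _ _ _ |>.2 ⟨fun h => ?_, Or.inr ?_⟩
    · have hj0 : ((j : ℕ) : ZMod n) = 0 := sub_eq_self.1 (congrArg Subtype.val h).symm
      exact Nat.not_dvd_of_pos_of_lt hj1 (hjs.trans hsn) ((ZMod.natCast_eq_zero_iff j n).1 hj0)
    · have hmeet := inter_image_add_nonempty hjs a (k - j)
      rwa [sub_add_cancel] at hmeet
  · show (k - j - b).val < (k - b).val
    have hjval : (j : ZMod n).val = j := ZMod.val_cast_of_lt (hjs.trans hsn)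
    rw [sub_right_comm, ZMod.val_sub (hjval.symm ▸ hjk), hjval]
    omega

/-- A contiguous index set of cardinality at least 3 is
friendly. -/
theorem stmt_16 {n : ℕ} [NeZero n] (J : Set (ZMod n))
    (h3 : 3 ≤ J.ncard)
    (hcontig : ∃ a : ZMod n,
      J = (fun i : ℕ => a + (i : ZMod n)) '' {i : ℕ | i < J.ncard}) :
    Friendly J := by
  obtain ⟨a, hJ⟩ := hcontig
  rcases lt_or_ge J.ncard n with hsn | hns
  · exact Or.inr fun K hK => ⟨le_ncard_iUnion_image_add (by omega) hsn hJ hK,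
      connected_fromRel_inter_image_add h3 hsn hJ hK⟩
  · refine Or.inl (Set.eq_univ_of_forall fun x => ?_)
    rw [hJ]
    exact ⟨(x - a).val, (ZMod.val_lt _).trans_le hns, by simp⟩
end

section
/- If J ⊆ ℤ/n satisfies |J| > n/2 and J is not periodic, then J is friendly. -/
/-
If `x` is missed by the translates `J + k`, `k ∈ K`, then `x - K ⊆ Jᶜ`, and `|K| = |Jᶜ|` forces
equality. Two missed points `x ≠ y` thus give `Jᶜ = x - K = y - K`, so `Jᶜ`, hence `J`, is
invariant under translation by `y - x`; so at most one point is missed. Connectivity is easier: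
two translates of a set with more than half the elements always meet, so the graph is complete.
-/

theorem Set.inter_nonempty_of_card_lt_ncard_add_ncard {α : Type*} [Finite α] {s t : Set α}
    (h : Nat.card α < s.ncard + t.ncard) : (s ∩ t).Nonempty := by
  apply Set.nonempty_of_ncard_ne_zero
  have := Set.ncard_inter_add_ncard_union s t
  have := Set.ncard_le_card (s ∪ t)
  omega

theorem SimpleGraph.fromRel_connected_of_forall_ne {V : Type*} [Nonempty V] {r : V → V → Prop}
    (h : ∀ a b, a ≠ b → r a b) : (fromRel r).Connected := by
  convert connected_top (V := V)
  ext a b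
  simpa [fromRel_adj] using fun hab => Or.inl (h a b hab)

section Translates

variable {G : Type*} [AddCommGroup G]

theorem image_add_compl (J : Set G) (ℓ : G) : (· + ℓ) '' Jᶜ = ((· + ℓ) '' J)ᶜ :=
  Set.image_compl_eq (Equiv.addRight ℓ).bijective

theorem image_add_sub_eq_of_image_sub_eq {K S : Set G} {x y : G} (hx : (x - ·) '' K = S)
    (hy : (y - ·) '' K = S) : (· + (y - x)) '' S = S := by
  rw [← hx, Set.image_image]
  convert hy using 2 with k
  abel

variable [Finite G]

theorem image_sub_eq_compl_of_notMem_iUnion {J : Set G} {K : Finset G}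
    (hK : K.card = Jᶜ.ncard) {x : G} (hx : x ∉ ⋃ k ∈ K, (· + k) '' J) :
    (x - ·) '' ↑K = Jᶜ := by
  refine Set.eq_of_subset_of_ncard_le ?_ ?_
  · rintro _ ⟨k, hk, rfl⟩ hxk
    exact hx (Set.mem_biUnion hk ⟨x - k, hxk, sub_add_cancel x k⟩)
  · rw [Set.ncard_image_of_injective _ (sub_right_injective), Set.ncard_coe_finset, hK]

theorem ncard_compl_iUnion_image_add_le_one {J : Set G}
    (hper : ¬ ∃ ℓ : G, ℓ ≠ 0 ∧ (· + ℓ) '' J = J) {K : Finset G} (hK : K.card = Jᶜ.ncard) :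
    (⋃ k ∈ K, (· + k) '' J)ᶜ.ncard ≤ 1 := by
  rw [Set.ncard_le_one]
  intro x hx y hy
  by_contra hxy
  refine hper ⟨y - x, sub_ne_zero.mpr (Ne.symm hxy), ?_⟩
  have hcompl := image_add_sub_eq_of_image_sub_eq (image_sub_eq_compl_of_notMem_iUnion hK hx)
    (image_sub_eq_compl_of_notMem_iUnion hK hy)
  rwa [image_add_compl, compl_inj_iff] at hcompl

theorem card_sub_one_le_ncard_iUnion_image_add {J : Set G}
    (hper : ¬ ∃ ℓ : G, ℓ ≠ 0 ∧ (· + ℓ) '' J = J) {K : Finset G} (hK : K.card = Jᶜ.ncard) :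
    Nat.card G - 1 ≤ (⋃ k ∈ K, (· + k) '' J).ncard := by
  have := Set.ncard_add_ncard_compl (⋃ k ∈ K, (· + k) '' J)
  have := ncard_compl_iUnion_image_add_le_one hper hK
  omega

theorem image_add_inter_image_add_nonempty {J : Set G} (hJ : Nat.card G < 2 * J.ncard)
    (a b : G) : ((· + a) '' J ∩ (· + b) '' J).Nonempty := by
  apply Set.inter_nonempty_of_card_lt_ncard_add_ncard
  rw [Set.ncard_image_of_injective _ (add_left_injective a),
    Set.ncard_image_of_injective _ (add_left_injective b)]
  omega

end Translates

/-- An index set with |J| > n/2 that is not periodic is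
friendly. -/
theorem stmt_17 {n : ℕ} [NeZero n] (J : Set (ZMod n))
    (hcard : n < 2 * J.ncard)
    (hper : ¬ ∃ ℓ : ZMod n, ℓ ≠ 0 ∧ (fun j => j + ℓ) '' J = J) :
    Friendly J := by
  by_cases huniv : J = Set.univ
  · exact Or.inl huniv
  refine Or.inr fun K hK => ⟨?_, ?_⟩
  · have hKcompl : K.card = Jᶜ.ncard := by rw [hK, Set.ncard_compl, Nat.card_zmod]
    simpa only [Nat.card_zmod] using card_sub_one_le_ncard_iUnion_image_add hper hKcompl
  · have hJlt : J.ncard < n := by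
      simpa [Nat.card_zmod] using Set.ncard_lt_card huniv
    obtain ⟨k, hk⟩ := Finset.card_pos.mp (by omega : 0 < K.card)
    have : Nonempty {k // k ∈ K} := ⟨⟨k, hk⟩⟩
    exact SimpleGraph.fromRel_connected_of_forall_ne fun a b _ =>
      image_add_inter_image_add_nonempty (by rwa [Nat.card_zmod]) (a : ZMod n) b
end

section
/- Let J ⊆ ℤ/n with |J| = s < n. Then the following are equivalent: (i) for every choice of n−s distinct shifts k_1,…,k_{n−s} ∈ ℤ/n, the shifted sets J_t = J + k_t (t = 1,…,n−s) satisfy |J_1 ∪ ⋯ ∪ J_{n−s}| ≥ n−1; (ii) J is not periodic. -/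
/-!
A point `z` is missed by the union of the translates `J + k`, `k ∈ K`, exactly when `z - J`
avoids `K`. When `|K| = n - |J|` this forces `z - J = Kᶜ`, so two missed points `x`, `y` give
`x - J = y - J`, i.e. `J` has period `y - x`; hence an aperiodic `J` misses at most one point.
Conversely, if `J + ℓ = J` with `ℓ ≠ 0`, the shifts `K = (-J)ᶜ` miss both `0` and `ℓ`.
-/

open Set Pointwise

variable {G : Type*} [AddCommGroup G]

theorem mem_image_sub_left_iff {J : Set G} {x w : G} :
    w ∈ (fun j => x - j) '' J ↔ x - w ∈ J :=
  ⟨by rintro ⟨j, hj, rfl⟩; simpa using hj, fun h => ⟨x - w, h, sub_sub_cancel x w⟩⟩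

theorem notMem_iUnion_image_add_right_iff {J : Set G} {K : Finset G} {z : G} :
    z ∉ ⋃ k ∈ K, (fun j => j + k) '' J ↔ ∀ k ∈ K, z - k ∉ J := by
  simp [image_add_right, sub_eq_add_neg]

theorem image_add_sub_eq_of_image_sub_eq_s18 {J : Set G} {x y : G}
    (h : (fun j => x - j) '' J = (fun j => y - j) '' J) :
    (fun j => j + (y - x)) '' J = J := by
  ext z
  have hz := congrArg (y - z ∈ ·) h
  simp only [mem_image_sub_left_iff, sub_sub_cancel, eq_iff_iff] at hz
  rw [image_add_right, mem_preimage, ← hz]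
  abel_nf

section Finite

variable [Fintype G]

theorem image_sub_eq_compl_of_notMem_iUnion_image_add_right {J : Set G} {K : Finset G}
    (hK : K.card = Fintype.card G - J.ncard) {z : G}
    (hz : z ∉ ⋃ k ∈ K, (fun j => j + k) '' J) :
    (fun j => z - j) '' J = (↑K)ᶜ := by
  refine eq_of_subset_of_ncard_le ?_ ?_ (toFinite _)
  · rintro _ ⟨j, hj, rfl⟩ hk
    exact notMem_iUnion_image_add_right_iff.1 hz _ hk (by simpa using hj)
  · have hJ := ncard_le_card J
    have hK' := ncard_add_ncard_compl (K : Set G)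
    rw [ncard_coe_finset, hK, Nat.card_eq_fintype_card] at hK'
    rw [Nat.card_eq_fintype_card] at hJ
    rw [ncard_image_of_injective _ sub_right_injective]
    omega

theorem ncard_compl_iUnion_image_add_right_le_one {J : Set G}
    (hJ : ¬ ∃ ℓ : G, ℓ ≠ 0 ∧ (fun j => j + ℓ) '' J = J) {K : Finset G}
    (hK : K.card = Fintype.card G - J.ncard) :
    (⋃ k ∈ K, (fun j => j + k) '' J)ᶜ.ncard ≤ 1 := by
  rw [ncard_le_one (toFinite _)]
  intro x hx y hy
  have hxy := image_add_sub_eq_of_image_sub_eq_s18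
    ((image_sub_eq_compl_of_notMem_iUnion_image_add_right hK hx).trans
      (image_sub_eq_compl_of_notMem_iUnion_image_add_right hK hy).symm)
  by_contra hne
  exact hJ ⟨y - x, sub_ne_zero.2 (Ne.symm hne), hxy⟩

theorem exists_card_eq_ncard_iUnion_image_add_right_add_two_le {J : Set G} {ℓ : G}
    (hℓ : ℓ ≠ 0) (hper : (fun j => j + ℓ) '' J = J) :
    ∃ K : Finset G, K.card = Fintype.card G - J.ncard ∧
      (⋃ k ∈ K, (fun j => j + k) '' J).ncard + 2 ≤ Fintype.card G := by
  classical
  refine ⟨(-J).toFinsetᶜ, ?_, ?_⟩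
  · rw [Finset.card_compl, ← ncard_eq_toFinset_card', ncard_neg]
  set S := ⋃ k ∈ (-J).toFinsetᶜ, (fun j => j + k) '' J
  have hmissed : ∀ z ∈ ({0, ℓ} : Set G), z ∉ S := by
    intro z hz
    rw [notMem_iUnion_image_add_right_iff]
    intro k hk hzk
    refine Finset.mem_compl.1 hk (mem_toFinset.2 (mem_neg.2 ?_))
    rcases hz with rfl | rfl
    · simpa using hzk
    · rw [← hper, image_add_right, mem_preimage] at hzk
      convert hzk using 1
      abel
  calc S.ncard + 2 = S.ncard + ({0, ℓ} : Set G).ncard := by rw [ncard_pair hℓ.symm]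
    _ ≤ ({0, ℓ} : Set G)ᶜ.ncard + ({0, ℓ} : Set G).ncard :=
      Nat.add_le_add_right (ncard_le_ncard fun z hzS hz => hmissed z hz hzS) _
    _ = Fintype.card G := by
      rw [add_comm, ncard_add_ncard_compl, Nat.card_eq_fintype_card]

end Finite

theorem stmt_18_general {n s : ℕ} [NeZero n] (J : Set (ZMod n))
    (hcard : J.ncard = s) :
    (∀ K : Finset (ZMod n), K.card = n - s →
        n - 1 ≤ Set.ncard (⋃ k ∈ K, (fun j => j + k) '' J))
    ↔ ¬ ∃ ℓ : ZMod n, ℓ ≠ 0 ∧ (fun j => j + ℓ) '' J = J := by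
  subst hcard
  have hn : Fintype.card (ZMod n) = n := ZMod.card n
  constructor
  · rintro hcover ⟨ℓ, hℓ, hper⟩
    obtain ⟨K, hK, hS⟩ := exists_card_eq_ncard_iUnion_image_add_right_add_two_le hℓ hper
    have := hcover K (by rw [hK, hn])
    omega
  · intro hJ K hK
    have hmissed := ncard_compl_iUnion_image_add_right_le_one hJ (by rw [hK, hn])
    have hsplit := ncard_add_ncard_compl (⋃ k ∈ K, (fun j => j + k) '' J)
    rw [Nat.card_eq_fintype_card, hn] at hsplit
    omega

/-- For J ⊆ ℤ/n with |J| = s < n, every choice of n−s distinct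
shifts covers at least n−1 indices if and only if J is not periodic. -/
theorem stmt_18 {n s : ℕ} [NeZero n] (J : Set (ZMod n))
    (hcard : J.ncard = s) (hs : s < n) :
    (∀ K : Finset (ZMod n), K.card = n - s →
        n - 1 ≤ Set.ncard (⋃ k ∈ K, (fun j => j + k) '' J))
    ↔ ¬ ∃ ℓ : ZMod n, ℓ ≠ 0 ∧ (fun j => j + ℓ) '' J = J :=
  stmt_18_general J hcard
end
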